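/- Let p > 1, c₀, c₁ ∈ (−1, 1), a : [0,T] × [0,1] → [0,∞) continuous, and let (ρ, ξ) be a C¹ solution of ρ_t − ρ_x = −(1/2) a (ρ − ξ), ξ_t + ξ_x = (1/2) a (ρ − ξ) on [0,T] × [0,1] with boundary conditions ξ(t,0) = c₀ ρ(t,0) and ρ(t,1) = c₁ ξ(t,1). Then for all t ∈ [0,T], (1/p)∫₀¹(|ρ(t,x)|^p + |ξ(t,x)|^p) dx + (1/2)∫₀^t ∫₀¹ a (ρ−ξ)(ρ|ρ|^{p−2} − ξ|ξ|^{p−2}) dx ds + (1/p)∫₀^t [(1 − |c₁|^p)|ξ(s,1)|^p + (1 − |c₀|^p)|ρ(s,0)|^p] ds = (1/p)∫₀¹(|ρ(0,x)|^p + |ξ(0,x)|^p) dx; in particular t ↦ ∫₀¹(|ρ(t,x)|^p + |ξ(t,x)|^p) dx is nonincreasing. -/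

import Mathlib

/-!
Multiplying the two equations by `p φ(ρ)` and `p φ(ξ)`, where `φ(u) = u |u|^(p-2)` is the
derivative of `|u|^p / p`, turns the time derivative of the energy density `|ρ|^p + |ξ|^p` into the
`x`-derivative of `|ρ|^p - |ξ|^p` minus `(p/2) a (ρ - ξ) (φ ρ - φ ξ)`. Integrating in `x`,
the boundary conditions turn the boundary values into
`-(1 - |c₁|^p) |ξ(t,1)|^p - (1 - |c₀|^p) |ρ(t,0)|^p`, and integrating in time (Fubini) gives
the identity. Both losses are nonnegative, the damping one
because `φ` is the derivative of the convex function `|u|^p` and hence monotone, so the energy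
decreases.
-/

open MeasureTheory Set

lemma continuous_mul_abs_rpow_sub_two {p : ℝ} (hp : 1 < p) :
    Continuous fun u : ℝ => u * |u| ^ (p - 2) := by
  have h := (contDiff_norm_rpow (E := ℝ) hp).continuous_deriv le_rfl
  have heq : (fun u : ℝ => u * |u| ^ (p - 2))
      = fun u => p⁻¹ * deriv (fun v : ℝ => ‖v‖ ^ p) u := by
    funext u
    rw [(hasDerivAt_norm_rpow u hp).deriv, Real.norm_eq_abs]
    field_simp
  rw [heq]
  exact continuous_const.mul h

lemma convexOn_abs_rpow {p : ℝ} (hp : 1 ≤ p) : ConvexOn ℝ univ fun u : ℝ => |u| ^ p := by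
  have himage : (fun u : ℝ => |u|) '' univ = Ici 0 := by
    ext y
    exact ⟨by rintro ⟨u, -, rfl⟩; exact abs_nonneg u, fun hy => ⟨y, trivial, abs_of_nonneg hy⟩⟩
  refine ConvexOn.comp (g := fun x : ℝ => x ^ p) ?_ (convexOn_norm convex_univ) ?_ <;> rw [himage]
  · exact convexOn_rpow hp
  · exact Real.monotoneOn_rpow_Ici_of_exponent_nonneg (by linarith)

lemma monotone_mul_abs_rpow_sub_two {p : ℝ} (hp : 1 < p) :
    Monotone fun u : ℝ => u * |u| ^ (p - 2) := by
  intro u v huv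
  have h := (convexOn_abs_rpow hp.le).monotoneOn_deriv
    (fun x _ => (hasDerivAt_abs_rpow x hp).differentiableAt) (mem_univ u) (mem_univ v) huv
  rw [(hasDerivAt_abs_rpow u hp).deriv, (hasDerivAt_abs_rpow v hp).deriv, mul_assoc, mul_assoc,
    mul_comm (|u| ^ _), mul_comm (|v| ^ _)] at h
  exact le_of_mul_le_mul_left h (by linarith)

lemma sub_mul_sub_mul_abs_rpow_nonneg {p : ℝ} (hp : 1 < p) (u v : ℝ) :
    0 ≤ (u - v) * (u * |u| ^ (p - 2) - v * |v| ^ (p - 2)) := by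
  rcases le_total u v with h | h
  · exact mul_nonneg_of_nonpos_of_nonpos (sub_nonpos.2 h)
      (sub_nonpos.2 (monotone_mul_abs_rpow_sub_two hp h))
  · exact mul_nonneg (sub_nonneg.2 h) (sub_nonneg.2 (monotone_mul_abs_rpow_sub_two hp h))

section PartialDeriv

variable {f : ℝ → ℝ → ℝ}

lemma ContDiff.hasDerivAt_fst (hf : ContDiff ℝ 1 fun q : ℝ × ℝ => f q.1 q.2) (t x : ℝ) :
    HasDerivAt (fun s => f s x)
      (fderiv ℝ (fun q : ℝ × ℝ => f q.1 q.2) (t, x) (1, 0)) t :=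
  (hf.differentiable one_ne_zero (t, x)).hasFDerivAt.comp_hasDerivAt (f := fun s => (s, x)) t
    ((hasDerivAt_id t).prodMk (hasDerivAt_const t x))

lemma ContDiff.hasDerivAt_snd (hf : ContDiff ℝ 1 fun q : ℝ × ℝ => f q.1 q.2) (t x : ℝ) :
    HasDerivAt (fun y => f t y)
      (fderiv ℝ (fun q : ℝ × ℝ => f q.1 q.2) (t, x) (0, 1)) x :=
  (hf.differentiable one_ne_zero (t, x)).hasFDerivAt.comp_hasDerivAt (f := fun y => (t, y)) x
    ((hasDerivAt_const x t).prodMk (hasDerivAt_id x))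

lemma ContDiff.continuous_deriv_fst (hf : ContDiff ℝ 1 fun q : ℝ × ℝ => f q.1 q.2) :
    Continuous fun q : ℝ × ℝ => deriv (fun s => f s q.2) q.1 := by
  simp_rw [fun q : ℝ × ℝ => (hf.hasDerivAt_fst q.1 q.2).deriv]
  exact (hf.continuous_fderiv one_ne_zero).clm_apply continuous_const

lemma ContDiff.continuous_deriv_snd (hf : ContDiff ℝ 1 fun q : ℝ × ℝ => f q.1 q.2) :
    Continuous fun q : ℝ × ℝ => deriv (fun y => f q.1 y) q.2 := by
  simp_rw [fun q : ℝ × ℝ => (hf.hasDerivAt_snd q.1 q.2).deriv]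
  exact (hf.continuous_fderiv one_ne_zero).clm_apply continuous_const

end PartialDeriv

lemma integral_sub_integral_eq_integral_integral_deriv {g g' : ℝ → ℝ → ℝ} {a b t₀ t : ℝ}
    (hg : Continuous fun q : ℝ × ℝ => g q.1 q.2)
    (hderiv : ∀ s x, HasDerivAt (fun τ => g τ x) (g' s x) s)
    (hg' : Continuous fun q : ℝ × ℝ => g' q.1 q.2) :
    (∫ x in a..b, g t x) - ∫ x in a..b, g t₀ x = ∫ s in t₀..t, ∫ x in a..b, g' s x := by
  have hslice : ∀ τ, IntervalIntegrable (g τ) volume a b := fun τ =>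
    (hg.comp (Continuous.prodMk_right τ)).intervalIntegrable a b
  rw [← intervalIntegral.integral_sub (hslice t) (hslice t₀)]
  calc ∫ x in a..b, (g t x - g t₀ x)
      = ∫ x in a..b, ∫ s in t₀..t, g' s x :=
        intervalIntegral.integral_congr fun x _ =>
          (intervalIntegral.integral_eq_sub_of_hasDerivAt (fun s _ => hderiv s x)
            ((hg'.comp (Continuous.prodMk_left x)).intervalIntegrable t₀ t)).symm
    _ = ∫ s in t₀..t, ∫ x in a..b, g' s x := by
        refine (intervalIntegral_intervalIntegral_swap ?_).symm
        exact (hg'.continuousOn.integrableOn_compact (isCompact_uIcc.prod isCompact_uIcc)).mono_set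
          (prod_mono uIoc_subset_uIcc uIoc_subset_uIcc)

lemma HasDerivAt.abs_rpow {p : ℝ} (hp : 1 < p) {f : ℝ → ℝ} {f' t : ℝ} (hf : HasDerivAt f f' t) :
    HasDerivAt (fun τ => |f τ| ^ p) (p * (f' * (f t * |f t| ^ (p - 2)))) t :=
  ((hasDerivAt_abs_rpow (f t) hp).comp t hf).congr_deriv (by ring)

lemma monotoneOn_intervalIntegral_of_nonneg {f : ℝ → ℝ} {a b : ℝ} (hf : Continuous f)
    (hnonneg : ∀ s ∈ Icc a b, 0 ≤ f s) : MonotoneOn (fun t => ∫ s in a..t, f s) (Icc a b) :=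
  fun _ h₁ _ h₂ h₁₂ => intervalIntegral.integral_mono_interval le_rfl h₁.1 h₁₂
    ((ae_restrict_iff' measurableSet_Ioc).2
      (Filter.Eventually.of_forall fun s hs => hnonneg s ⟨hs.1.le, hs.2.trans h₂.2⟩))
    (hf.intervalIntegrable _ _)

namespace DampedWave

structure IsSolution (T c₀ c₁ : ℝ) (a ρ ξ : ℝ → ℝ → ℝ) : Prop where
  contDiff_ρ : ContDiff ℝ 1 fun q : ℝ × ℝ => ρ q.1 q.2
  contDiff_ξ : ContDiff ℝ 1 fun q : ℝ × ℝ => ξ q.1 q.2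
  pde_ρ : ∀ t ∈ Icc (0:ℝ) T, ∀ x ∈ Icc (0:ℝ) 1,
    deriv (fun s => ρ s x) t - deriv (fun y => ρ t y) x = -(1 / 2) * a t x * (ρ t x - ξ t x)
  pde_ξ : ∀ t ∈ Icc (0:ℝ) T, ∀ x ∈ Icc (0:ℝ) 1,
    deriv (fun s => ξ s x) t + deriv (fun y => ξ t y) x = (1 / 2) * a t x * (ρ t x - ξ t x)
  boundary : ∀ t ∈ Icc (0:ℝ) T, ξ t 0 = c₀ * ρ t 0 ∧ ρ t 1 = c₁ * ξ t 1

noncomputable def energy (p : ℝ) (ρ ξ : ℝ → ℝ → ℝ) (t : ℝ) : ℝ :=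
  ∫ x in (0:ℝ)..1, (|ρ t x| ^ p + |ξ t x| ^ p)

noncomputable def dampingDensity (p : ℝ) (a ρ ξ : ℝ → ℝ → ℝ) (s x : ℝ) : ℝ :=
  a s x * (ρ s x - ξ s x) * (ρ s x * |ρ s x| ^ (p - 2) - ξ s x * |ξ s x| ^ (p - 2))

noncomputable def dampingLoss (p : ℝ) (a ρ ξ : ℝ → ℝ → ℝ) (s : ℝ) : ℝ :=
  ∫ x in (0:ℝ)..1, dampingDensity p a ρ ξ s x

noncomputable def boundaryLoss (p c₀ c₁ : ℝ) (ρ ξ : ℝ → ℝ → ℝ) (s : ℝ) : ℝ :=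
  (1 - |c₁| ^ p) * |ξ s 1| ^ p + (1 - |c₀| ^ p) * |ρ s 0| ^ p

variable {p T c₀ c₁ : ℝ} {a ρ ξ : ℝ → ℝ → ℝ}

lemma continuous_dampingDensity (hp : 1 < p) (ha : Continuous fun q : ℝ × ℝ => a q.1 q.2)
    (hρ : Continuous fun q : ℝ × ℝ => ρ q.1 q.2) (hξ : Continuous fun q : ℝ × ℝ => ξ q.1 q.2) :
    Continuous fun q : ℝ × ℝ => dampingDensity p a ρ ξ q.1 q.2 :=
  (ha.mul (hρ.sub hξ)).mul
    (((continuous_mul_abs_rpow_sub_two hp).comp hρ).sub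
      ((continuous_mul_abs_rpow_sub_two hp).comp hξ))

lemma continuous_dampingLoss (hp : 1 < p) (ha : Continuous fun q : ℝ × ℝ => a q.1 q.2)
    (hρ : Continuous fun q : ℝ × ℝ => ρ q.1 q.2) (hξ : Continuous fun q : ℝ × ℝ => ξ q.1 q.2) :
    Continuous (dampingLoss p a ρ ξ) :=
  intervalIntegral.continuous_parametric_intervalIntegral_of_continuous'
    (continuous_dampingDensity hp ha hρ hξ) 0 1

lemma continuous_boundaryLoss (hp : 0 ≤ p)
    (hρ : Continuous fun q : ℝ × ℝ => ρ q.1 q.2) (hξ : Continuous fun q : ℝ × ℝ => ξ q.1 q.2) :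
    Continuous (boundaryLoss p c₀ c₁ ρ ξ) := by
  have hpow : Continuous fun u : ℝ => |u| ^ p := continuous_abs.rpow_const fun _ => Or.inr hp
  exact (continuous_const.mul (hpow.comp (hξ.comp (Continuous.prodMk_left 1)))).add
    (continuous_const.mul (hpow.comp (hρ.comp (Continuous.prodMk_left 0))))

lemma dampingLoss_nonneg (hp : 1 < p) {s : ℝ} (ha : ∀ x ∈ Icc (0:ℝ) 1, 0 ≤ a s x) :
    0 ≤ dampingLoss p a ρ ξ s :=
  intervalIntegral.integral_nonneg zero_le_one fun x hx => by
    rw [dampingDensity, mul_assoc]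
    exact mul_nonneg (ha x hx) (sub_mul_sub_mul_abs_rpow_nonneg hp _ _)

lemma boundaryLoss_nonneg (hp : 0 ≤ p) (hc₀ : |c₀| ≤ 1) (hc₁ : |c₁| ≤ 1) (s : ℝ) :
    0 ≤ boundaryLoss p c₀ c₁ ρ ξ s := by
  have h₀ := Real.rpow_le_one (abs_nonneg c₀) hc₀ hp
  have h₁ := Real.rpow_le_one (abs_nonneg c₁) hc₁ hp
  exact add_nonneg (mul_nonneg (sub_nonneg.2 h₁) (by positivity))
    (mul_nonneg (sub_nonneg.2 h₀) (by positivity))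

namespace IsSolution

lemma integral_energyRate_eq (hp : 1 < p) (ha : Continuous fun q : ℝ × ℝ => a q.1 q.2)
    (h : IsSolution T c₀ c₁ a ρ ξ) {s : ℝ} (hs : s ∈ Icc 0 T) :
    ∫ x in (0:ℝ)..1, (p * (deriv (fun τ => ρ τ x) s * (ρ s x * |ρ s x| ^ (p - 2)))
        + p * (deriv (fun τ => ξ τ x) s * (ξ s x * |ξ s x| ^ (p - 2))))
      = -(p / 2 * dampingLoss p a ρ ξ s) - boundaryLoss p c₀ c₁ ρ ξ s := by
  set flux : ℝ → ℝ := fun x => p * (deriv (fun y => ρ s y) x * (ρ s x * |ρ s x| ^ (p - 2)))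
    - p * (deriv (fun y => ξ s y) x * (ξ s x * |ξ s x| ^ (p - 2)))
  have hflux : ∀ x, HasDerivAt (fun y => |ρ s y| ^ p - |ξ s y| ^ p) (flux x) x := fun x =>
    ((h.contDiff_ρ.hasDerivAt_snd s x).differentiableAt.hasDerivAt.abs_rpow hp).sub
      ((h.contDiff_ξ.hasDerivAt_snd s x).differentiableAt.hasDerivAt.abs_rpow hp)
  have hslice : Continuous fun x : ℝ => (s, x) := Continuous.prodMk_right s
  have hφ := continuous_mul_abs_rpow_sub_two hp
  have hflux_cont : Continuous flux :=
    (continuous_const.mul ((h.contDiff_ρ.continuous_deriv_snd.comp hslice).mul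
      (hφ.comp (h.contDiff_ρ.continuous.comp hslice)))).sub
    (continuous_const.mul ((h.contDiff_ξ.continuous_deriv_snd.comp hslice).mul
      (hφ.comp (h.contDiff_ξ.continuous.comp hslice))))
  have hrate : ∀ x ∈ uIcc (0:ℝ) 1,
      p * (deriv (fun τ => ρ τ x) s * (ρ s x * |ρ s x| ^ (p - 2)))
        + p * (deriv (fun τ => ξ τ x) s * (ξ s x * |ξ s x| ^ (p - 2)))
      = flux x - p / 2 * dampingDensity p a ρ ξ s x := by
    intro x hx
    rw [uIcc_of_le zero_le_one] at hx
    have hρ : deriv (fun τ => ρ τ x) s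
        = deriv (fun y => ρ s y) x - 1 / 2 * a s x * (ρ s x - ξ s x) := by
      linarith [h.pde_ρ s hs x hx]
    have hξ : deriv (fun τ => ξ τ x) s
        = -deriv (fun y => ξ s y) x + 1 / 2 * a s x * (ρ s x - ξ s x) := by
      linarith [h.pde_ξ s hs x hx]
    rw [hρ, hξ, dampingDensity]
    ring
  have hdamp : Continuous (dampingDensity p a ρ ξ s) :=
    (continuous_dampingDensity hp ha h.contDiff_ρ.continuous h.contDiff_ξ.continuous).comp hslice
  obtain ⟨hb₀, hb₁⟩ := h.boundary s hs
  rw [intervalIntegral.integral_congr hrate, intervalIntegral.integral_sub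
    (hflux_cont.intervalIntegrable 0 1) ((hdamp.intervalIntegrable 0 1).const_mul (p / 2)),
    intervalIntegral.integral_eq_sub_of_hasDerivAt (fun x _ => hflux x)
      (hflux_cont.intervalIntegrable 0 1), intervalIntegral.integral_const_mul]
  simp only [dampingLoss, boundaryLoss]
  rw [hb₀, hb₁, abs_mul, abs_mul, Real.mul_rpow (abs_nonneg _) (abs_nonneg _),
    Real.mul_rpow (abs_nonneg _) (abs_nonneg _)]
  ring

lemma energy_eq (hp : 1 < p) (ha : Continuous fun q : ℝ × ℝ => a q.1 q.2)
    (h : IsSolution T c₀ c₁ a ρ ξ) {t : ℝ} (ht : t ∈ Icc 0 T) :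
    energy p ρ ξ t = energy p ρ ξ 0 - p / 2 * (∫ s in (0:ℝ)..t, dampingLoss p a ρ ξ s)
      - ∫ s in (0:ℝ)..t, boundaryLoss p c₀ c₁ ρ ξ s := by
  have hρ := h.contDiff_ρ
  have hξ := h.contDiff_ξ
  have hp₀ : 0 ≤ p := by linarith
  have hpow : Continuous fun u : ℝ => |u| ^ p := continuous_abs.rpow_const fun _ => Or.inr hp₀
  have hφ := continuous_mul_abs_rpow_sub_two hp
  have hrate_cont : Continuous fun q : ℝ × ℝ =>
      p * (deriv (fun τ => ρ τ q.2) q.1 * (ρ q.1 q.2 * |ρ q.1 q.2| ^ (p - 2)))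
        + p * (deriv (fun τ => ξ τ q.2) q.1 * (ξ q.1 q.2 * |ξ q.1 q.2| ^ (p - 2))) :=
    (continuous_const.mul (hρ.continuous_deriv_fst.mul (hφ.comp hρ.continuous))).add
      (continuous_const.mul (hξ.continuous_deriv_fst.mul (hφ.comp hξ.continuous)))
  have hsub : energy p ρ ξ t - energy p ρ ξ 0
      = ∫ s in (0:ℝ)..t, (-(p / 2 * dampingLoss p a ρ ξ s) - boundaryLoss p c₀ c₁ ρ ξ s) := by
    rw [energy, energy, integral_sub_integral_eq_integral_integral_deriv
      (g := fun τ x => |ρ τ x| ^ p + |ξ τ x| ^ p)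
      ((hpow.comp hρ.continuous).add (hpow.comp hξ.continuous))
      (fun s x => ((hρ.hasDerivAt_fst s x).differentiableAt.hasDerivAt.abs_rpow hp).add
        ((hξ.hasDerivAt_fst s x).differentiableAt.hasDerivAt.abs_rpow hp)) hrate_cont]
    refine intervalIntegral.integral_congr fun s hs => h.integral_energyRate_eq hp ha ?_
    rw [uIcc_of_le ht.1] at hs
    exact ⟨hs.1, hs.2.trans ht.2⟩
  rw [intervalIntegral.integral_sub, intervalIntegral.integral_neg,
    intervalIntegral.integral_const_mul] at hsub
  · linarith
  · exact ((continuous_dampingLoss hp ha hρ.continuous hξ.continuous).intervalIntegrable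
      0 t).const_mul _ |>.neg
  · exact (continuous_boundaryLoss hp₀ hρ.continuous hξ.continuous).intervalIntegrable 0 t

end IsSolution

end DampedWave

theorem stmt_15_general (p T c₀ c₁ : ℝ) (hp : 1 < p)
    (hc₀ : c₀ ∈ Set.Ioo (-1 : ℝ) 1) (hc₁ : c₁ ∈ Set.Ioo (-1 : ℝ) 1)
    (a ρ ξ : ℝ → ℝ → ℝ)
    (ha : Continuous (fun q : ℝ × ℝ => a q.1 q.2))
    (ha0 : ∀ t ∈ Set.Icc (0:ℝ) T, ∀ x ∈ Set.Icc (0:ℝ) 1, 0 ≤ a t x)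
    (hρ : ContDiff ℝ 1 (fun q : ℝ × ℝ => ρ q.1 q.2))
    (hξ : ContDiff ℝ 1 (fun q : ℝ × ℝ => ξ q.1 q.2))
    (hpde1 : ∀ t ∈ Set.Icc (0:ℝ) T, ∀ x ∈ Set.Icc (0:ℝ) 1,
      deriv (fun s => ρ s x) t - deriv (fun y => ρ t y) x
        = -(1 / 2) * a t x * (ρ t x - ξ t x))
    (hpde2 : ∀ t ∈ Set.Icc (0:ℝ) T, ∀ x ∈ Set.Icc (0:ℝ) 1,
      deriv (fun s => ξ s x) t + deriv (fun y => ξ t y) x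
        = (1 / 2) * a t x * (ρ t x - ξ t x))
    (hbc : ∀ t ∈ Set.Icc (0:ℝ) T, ξ t 0 = c₀ * ρ t 0 ∧ ρ t 1 = c₁ * ξ t 1) :
    (∀ t ∈ Set.Icc (0:ℝ) T,
      (1 / p) * (∫ x in (0:ℝ)..1, (|ρ t x| ^ p + |ξ t x| ^ p))
        + (1 / 2) * (∫ s in (0:ℝ)..t, ∫ x in (0:ℝ)..1,
            a s x * (ρ s x - ξ s x)
              * (ρ s x * |ρ s x| ^ (p - 2) - ξ s x * |ξ s x| ^ (p - 2)))
        + (1 / p) * ∫ s in (0:ℝ)..t,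
            ((1 - |c₁| ^ p) * |ξ s 1| ^ p + (1 - |c₀| ^ p) * |ρ s 0| ^ p)
      = (1 / p) * ∫ x in (0:ℝ)..1, (|ρ 0 x| ^ p + |ξ 0 x| ^ p)) ∧
    AntitoneOn (fun t => ∫ x in (0:ℝ)..1, (|ρ t x| ^ p + |ξ t x| ^ p))
      (Set.Icc (0:ℝ) T) := by
  open DampedWave in
  have hp₀ : 0 ≤ p := by linarith
  have hsol : IsSolution T c₀ c₁ a ρ ξ := ⟨hρ, hξ, hpde1, hpde2, hbc⟩
  have henergy := fun t (ht : t ∈ Icc 0 T) => hsol.energy_eq hp ha ht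
  refine ⟨fun t ht => ?_, fun t₁ ht₁ t₂ ht₂ ht => ?_⟩
  · show 1 / p * energy p ρ ξ t + 1 / 2 * (∫ s in (0:ℝ)..t, dampingLoss p a ρ ξ s)
      + 1 / p * (∫ s in (0:ℝ)..t, boundaryLoss p c₀ c₁ ρ ξ s) = 1 / p * energy p ρ ξ 0
    rw [henergy t ht]
    field_simp
    ring
  · have hdamping := monotoneOn_intervalIntegral_of_nonneg
      (continuous_dampingLoss hp ha hρ.continuous hξ.continuous)
      (fun s hs => dampingLoss_nonneg hp (ha0 s hs)) ht₁ ht₂ ht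
    have hboundary := monotoneOn_intervalIntegral_of_nonneg
      (continuous_boundaryLoss hp₀ hρ.continuous hξ.continuous)
      (fun s _ => boundaryLoss_nonneg hp₀ (abs_le.2 ⟨hc₀.1.le, hc₀.2.le⟩)
        (abs_le.2 ⟨hc₁.1.le, hc₁.2.le⟩) s) ht₁ ht₂ ht
    show energy p ρ ξ t₂ ≤ energy p ρ ξ t₁
    rw [henergy t₁ ht₁, henergy t₂ ht₂]
    linarith [mul_le_mul_of_nonneg_left hdamping (div_nonneg hp₀ zero_le_two)]

/-- L^p energy identity, with dissipative boundary terms, for the hyperbolic system with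
dynamic boundary conditions `ξ(t,0) = c₀ ρ(t,0)`, `ρ(t,1) = c₁ ξ(t,1)`; in particular
the L^p energy is nonincreasing on `[0,T]`. -/
theorem stmt_15 (p T c₀ c₁ : ℝ) (hp : 1 < p) (hT : 0 < T)
    (hc₀ : c₀ ∈ Set.Ioo (-1 : ℝ) 1) (hc₁ : c₁ ∈ Set.Ioo (-1 : ℝ) 1)
    (a ρ ξ : ℝ → ℝ → ℝ)
    (ha : Continuous (fun q : ℝ × ℝ => a q.1 q.2))
    (ha0 : ∀ t ∈ Set.Icc (0:ℝ) T, ∀ x ∈ Set.Icc (0:ℝ) 1, 0 ≤ a t x)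
    (hρ : ContDiff ℝ 1 (fun q : ℝ × ℝ => ρ q.1 q.2))
    (hξ : ContDiff ℝ 1 (fun q : ℝ × ℝ => ξ q.1 q.2))
    (hpde1 : ∀ t ∈ Set.Icc (0:ℝ) T, ∀ x ∈ Set.Icc (0:ℝ) 1,
      deriv (fun s => ρ s x) t - deriv (fun y => ρ t y) x
        = -(1 / 2) * a t x * (ρ t x - ξ t x))
    (hpde2 : ∀ t ∈ Set.Icc (0:ℝ) T, ∀ x ∈ Set.Icc (0:ℝ) 1,
      deriv (fun s => ξ s x) t + deriv (fun y => ξ t y) x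
        = (1 / 2) * a t x * (ρ t x - ξ t x))
    (hbc : ∀ t ∈ Set.Icc (0:ℝ) T, ξ t 0 = c₀ * ρ t 0 ∧ ρ t 1 = c₁ * ξ t 1) :
    (∀ t ∈ Set.Icc (0:ℝ) T,
      (1 / p) * (∫ x in (0:ℝ)..1, (|ρ t x| ^ p + |ξ t x| ^ p))
        + (1 / 2) * (∫ s in (0:ℝ)..t, ∫ x in (0:ℝ)..1,
            a s x * (ρ s x - ξ s x)
              * (ρ s x * |ρ s x| ^ (p - 2) - ξ s x * |ξ s x| ^ (p - 2)))
        + (1 / p) * ∫ s in (0:ℝ)..t,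
            ((1 - |c₁| ^ p) * |ξ s 1| ^ p + (1 - |c₀| ^ p) * |ρ s 0| ^ p)
      = (1 / p) * ∫ x in (0:ℝ)..1, (|ρ 0 x| ^ p + |ξ 0 x| ^ p)) ∧
    AntitoneOn (fun t => ∫ x in (0:ℝ)..1, (|ρ t x| ^ p + |ξ t x| ^ p))
      (Set.Icc (0:ℝ) T) :=
  stmt_15_general p T c₀ c₁ hp hc₀ hc₁ a ρ ξ ha ha0 hρ hξ hpde1 hpde2 hbc
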